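/- Let m ≥ 1 be an integer. Every word w over {a,b} can be factorized as w = w₁w₂w₃ with w₁ ∈ LL({b a^m, a}), w₂ ∈ LL({b a^m, b}) and |w₃|_a < m. Moreover, such a factorization can be chosen so that whenever w is the shuffle of x occurrences of b a^m together with some word w' (i.e., w ∈ (ba^m)^{⧢x} ⧢ w' for some word w'), one has x ≤ |w₁|_b + |w₂|_a / m. -/

import Mathlib

namespace ShuffleWqo

inductive AB : Type
  | a : AB
  | b : AB
  deriving DecidableEq

open AB

/-- The word `a^n`. -/
def wa (n : ℕ) : List AB := List.replicate n a

/-- The word `b^n`. -/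
def wb (n : ℕ) : List AB := List.replicate n b

/-- Concatenation power of a word: `npow u e = u^e`. -/
def npow (u : List AB) : ℕ → List AB
  | 0 => []
  | n + 1 => u ++ npow u n

/-- `Shuffle u v w` means `w` is a shuffle of `u` and `v`. -/
inductive Shuffle {α : Type*} : List α → List α → List α → Prop
  | nil : Shuffle [] [] []
  | left {x : α} {u v w : List α} : Shuffle u v w → Shuffle (x :: u) v (x :: w)
  | right {x : α} {u v w : List α} : Shuffle u v w → Shuffle u (x :: v) (x :: w)

/-- One derivation step: `w` is obtained from `v` by shuffling in a word of `I`. -/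
def Derives {α : Type*} (I : Set (List α)) (v w : List α) : Prop :=
  ∃ u ∈ I, Shuffle v u w

/-- The reflexive-transitive closure `⊢*_I`. -/
def DerivesStar {α : Type*} (I : Set (List α)) : List α → List α → Prop :=
  Relation.ReflTransGen (Derives I)

/-- The shuffle closure `LL(I)` of a set of words `I`. -/
def LL {α : Type*} (I : Set (List α)) : Set (List α) := { w | DerivesStar I [] w }

/-- `r` is a well quasi-order on the language `L`. -/
def IsWqoOn {α : Type*} (r : List α → List α → Prop) (L : Set (List α)) : Prop :=
  ∀ f : ℕ → List α, (∀ n, f n ∈ L) → ∃ i j, i < j ∧ r (f i) (f j)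

/-- `IsShuffleOfN u x w' w` : `w` is the shuffle of `x` occurrences of `u` and the word `w'`. -/
def IsShuffleOfN {α : Type*} (u : List α) : ℕ → List α → List α → Prop
  | 0, w', w => w = w'
  | x + 1, w', w => ∃ v : List α, IsShuffleOfN u x w' v ∧ Shuffle v u w

/-! Give `a` weight `1` and `b` weight `-m`, and cut `w = w₁ r` right after a prefix of maximal
weight. Then every suffix of `w₁` has nonnegative weight and every prefix of `r` nonpositive weight.
These are exactly the conditions that let one repeatedly peel off a `b` together with the first `m`
letters `a` after it, showing `w₁ ∈ LL {ba^m, a}` and, once `r = w₂ w₃` is cut so that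
`m ∣ |w₂|_a`, also `w₂ ∈ LL {ba^m, b}`. For the bound, every copy of `ba^m` shuffled into
`w = w₁ (w₂ w₃)` has its `b` in `w₁` or all of its `m` letters `a` in `w₂ w₃`, so
`m x ≤ m |w₁|_b + |w₂ w₃|_a < m (|w₁|_b + |w₂|_a / m + 1)`. -/

open List

namespace Shuffle

variable {α : Type*}

theorem nil_right : ∀ l : List α, Shuffle l [] l
  | [] => .nil
  | _ :: l => .left (nil_right l)

theorem perm {u v w : List α} (h : Shuffle u v w) : w ~ u ++ v := by
  induction h with
  | nil => rfl
  | left _ ih => exact ih.cons _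
  | right _ ih => exact (ih.cons _).trans perm_middle.symm

theorem count_eq [DecidableEq α] {u v w : List α} (h : Shuffle u v w) (x : α) :
    w.count x = u.count x + v.count x := by
  rw [h.perm.count_eq, count_append]

theorem exists_of_append {t s u v : List α} (h : Shuffle t s (u ++ v)) :
    ∃ t₁ t₂ s₁ s₂, t = t₁ ++ t₂ ∧ s = s₁ ++ s₂ ∧ Shuffle t₁ s₁ u ∧ Shuffle t₂ s₂ v := by
  generalize hw : u ++ v = w at h
  induction h generalizing u with
  | nil =>
    obtain ⟨rfl, rfl⟩ := append_eq_nil_iff.mp hw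
    exact ⟨[], [], [], [], rfl, rfl, .nil, .nil⟩
  | @left x t s w h ih =>
    cases u with
    | nil => exact ⟨[], x :: t, [], s, rfl, rfl, .nil, (nil_append v ▸ hw) ▸ .left h⟩
    | cons y u =>
      simp only [cons_append, cons.injEq] at hw
      obtain ⟨rfl, hw⟩ := hw
      obtain ⟨t₁, t₂, s₁, s₂, rfl, rfl, h₁, h₂⟩ := ih hw
      exact ⟨y :: t₁, t₂, s₁, s₂, rfl, rfl, .left h₁, h₂⟩
  | @right x t s w h ih =>
    cases u with
    | nil => exact ⟨[], t, [], x :: s, rfl, rfl, .nil, (nil_append v ▸ hw) ▸ .right h⟩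
    | cons y u =>
      simp only [cons_append, cons.injEq] at hw
      obtain ⟨rfl, hw⟩ := hw
      obtain ⟨t₁, t₂, s₁, s₂, rfl, rfl, h₁, h₂⟩ := ih hw
      exact ⟨t₁, t₂, y :: s₁, s₂, rfl, rfl, .right h₁, h₂⟩

end Shuffle

theorem mem_LL_of_shuffle {α : Type*} {I : Set (List α)} {u v w : List α} (hv : v ∈ LL I)
    (hu : u ∈ I) (h : Shuffle v u w) : w ∈ LL I :=
  Relation.ReflTransGen.tail hv ⟨u, hu, h⟩

section EraseN

variable {α : Type*} [DecidableEq α] (x : α)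

def eraseN : ℕ → List α → List α
  | 0, l => l
  | _ + 1, [] => []
  | n + 1, y :: l => if y = x then eraseN n l else y :: eraseN (n + 1) l

@[simp]
theorem eraseN_nil (n : ℕ) : eraseN x n [] = [] := by
  cases n <;> rfl

theorem length_eraseN_le (n : ℕ) (l : List α) : (eraseN x n l).length ≤ l.length := by
  induction l generalizing n with
  | nil => simp
  | cons y l ih =>
    cases n with
    | zero => simp [eraseN]
    | succ n =>
      unfold eraseN
      split_ifs
      · exact (ih n).trans (Nat.le_succ _)
      · simpa using ih (n + 1)

theorem count_eraseN_self (n : ℕ) (l : List α) : (eraseN x n l).count x = l.count x - n := by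
  induction l generalizing n with
  | nil => simp
  | cons y l ih =>
    cases n with
    | zero => simp [eraseN]
    | succ n =>
      unfold eraseN
      split_ifs with hy <;> simp [ih, hy]

theorem count_eraseN_of_ne {y : α} (hy : y ≠ x) (n : ℕ) (l : List α) :
    (eraseN x n l).count y = l.count y := by
  induction l generalizing n with
  | nil => simp
  | cons z l ih =>
    cases n with
    | zero => simp [eraseN]
    | succ n =>
      unfold eraseN
      split_ifs with hz
      · subst hz; simp [ih, Ne.symm hy]
      · simp [count_cons, ih]

theorem shuffle_eraseN {n : ℕ} {l : List α} (hn : n ≤ l.count x) :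
    Shuffle (eraseN x n l) (replicate n x) l := by
  induction l generalizing n with
  | nil =>
    obtain rfl : n = 0 := by simpa using hn
    exact .nil
  | cons y l ih =>
    cases n with
    | zero => exact Shuffle.nil_right _
    | succ n =>
      unfold eraseN
      split_ifs with hy
      · subst hy
        exact .right (ih (by simpa using hn))
      · exact .left (ih (by simpa [count_cons, hy] using hn))

theorem exists_prefix_eraseN_eq {n : ℕ} {l p' : List α} (h : p' <+: eraseN x n l) :
    ∃ p, p <+: l ∧ eraseN x n p = p' := by
  induction l generalizing n p' with
  | nil => exact ⟨[], nil_prefix, by simpa using h⟩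
  | cons y l ih =>
    cases n with
    | zero => exact ⟨p', h, by rw [eraseN]⟩
    | succ n =>
      unfold eraseN at h
      split_ifs at h with hy
      · obtain ⟨p, hp, rfl⟩ := ih h
        exact ⟨y :: p, (prefix_cons_inj y).mpr hp, by simp [eraseN, hy]⟩
      · rcases prefix_cons_iff.mp h with rfl | ⟨t, rfl, ht⟩
        · exact ⟨[], nil_prefix, by simp⟩
        · obtain ⟨p, hp, rfl⟩ := ih ht
          exact ⟨y :: p, (prefix_cons_inj y).mpr hp, by simp [eraseN, hy]⟩

end EraseN

theorem exists_append_count_eq {α : Type*} [DecidableEq α] (x : α) :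
    ∀ {n : ℕ} {l : List α}, n ≤ l.count x → ∃ p s, l = p ++ s ∧ p.count x = n
  | 0, l, _ => ⟨[], l, rfl, count_nil⟩
  | _ + 1, [], h => by simp at h
  | n + 1, y :: l, h => by
    by_cases hy : y = x
    · subst hy
      obtain ⟨p, s, rfl, hp⟩ := exists_append_count_eq y (n := n) (l := l) (by simpa using h)
      exact ⟨y :: p, s, rfl, by simp [hp]⟩
    · obtain ⟨p, s, rfl, hp⟩ :=
        exists_append_count_eq x (n := n + 1) (l := l) (by simpa [count_cons, hy] using h)
      exact ⟨y :: p, s, rfl, by simp [hy, hp]⟩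

open AB

def weight (m : ℕ) (u : List AB) : ℤ := u.count a - m * u.count b

section Weight

variable (m : ℕ)

@[simp]
theorem weight_nil : weight m [] = 0 := by simp [weight]

@[simp]
theorem weight_cons_a (u : List AB) : weight m (a :: u) = weight m u + 1 := by
  simp [weight]; ring

@[simp]
theorem weight_cons_b (u : List AB) : weight m (b :: u) = weight m u - m := by
  simp [weight]; ring

@[simp]
theorem weight_append (u v : List AB) : weight m (u ++ v) = weight m u + weight m v := by
  simp [weight]; ring

theorem weight_eraseN_a (n : ℕ) (u : List AB) :
    weight m (eraseN a n u) = weight m u - min n (u.count a) := by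
  simp only [weight, count_eraseN_self, count_eraseN_of_ne a (show b ≠ a by decide)]
  omega

theorem weight_le_count_a (u : List AB) : weight m u ≤ u.count a := by
  have : (0 : ℤ) ≤ m * u.count b := by positivity
  simp only [weight]
  linarith

end Weight

theorem mem_LL_of_forall_suffix_weight_nonneg (m : ℕ) :
    ∀ l : List AB, (∀ s, s <:+ l → 0 ≤ weight m s) → l ∈ LL {[b] ++ wa m, [a]}
  | [], _ => Relation.ReflTransGen.refl
  | a :: t, hl =>
    have ht := mem_LL_of_forall_suffix_weight_nonneg m t fun s hs => hl s (hs.trans (suffix_cons a t))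
    mem_LL_of_shuffle ht (Set.mem_insert_of_mem _ rfl) (.right (Shuffle.nil_right t))
  | b :: t, hl => by
    have hbt : m ≤ weight m t := by simpa using hl _ suffix_rfl
    have hm : m ≤ t.count a := by exact_mod_cast hbt.trans (weight_le_count_a m t)
    have ht' : ∀ s', s' <:+ eraseN a m t → 0 ≤ weight m s' := by
      rintro s' ⟨p', hp's'⟩
      obtain ⟨p, ⟨st, rfl⟩, rfl⟩ := exists_prefix_eraseN_eq a ⟨s', hp's'⟩
      have hsplit := congrArg (weight m) hp's'
      have hst := hl st ((suffix_append p st).trans (suffix_cons b _))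
      have hp := weight_le_count_a m p
      simp only [weight_append, weight_eraseN_a, count_append] at hsplit hst hbt hm
      omega
    exact mem_LL_of_shuffle (mem_LL_of_forall_suffix_weight_nonneg m _ ht') (Set.mem_insert _ _)
      (.right (shuffle_eraseN a hm))
termination_by l => l.length
decreasing_by
  · simp
  · simpa using Nat.lt_succ_of_le (length_eraseN_le a m t)

theorem mem_LL_of_forall_prefix_weight_nonpos (m : ℕ) :
    ∀ l : List AB, (∀ p, p <+: l → weight m p ≤ 0) → m ∣ l.count a → l ∈ LL {[b] ++ wa m, [b]}
  | [], _, _ => Relation.ReflTransGen.refl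
  | a :: t, hl, _ => absurd (hl [a] (by simp)) (by simp)
  | b :: t, hl, hdvd => by
    rw [count_cons_of_ne (by decide)] at hdvd
    by_cases hm : m ≤ t.count a
    · have ht' : ∀ p', p' <+: eraseN a m t → weight m p' ≤ 0 := by
        intro p' hp'
        obtain ⟨p, hp, rfl⟩ := exists_prefix_eraseN_eq a hp'
        have hbp := hl (b :: p) ((prefix_cons_inj b).mpr hp)
        have hpa := weight_le_count_a m p
        simp only [weight_cons_b, weight_eraseN_a] at hbp ⊢
        omega
      have hdvd' : m ∣ (eraseN a m t).count a := by
        rw [count_eraseN_self]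
        exact Nat.dvd_sub hdvd dvd_rfl
      exact mem_LL_of_shuffle (mem_LL_of_forall_prefix_weight_nonpos m _ ht' hdvd')
        (Set.mem_insert _ _) (.right (shuffle_eraseN a hm))
    · have hta : t.count a = 0 := Nat.eq_zero_of_dvd_of_lt hdvd (not_le.mp hm)
      have ht : ∀ p, p <+: t → weight m p ≤ 0 := fun p hp =>
        (weight_le_count_a m p).trans (by exact_mod_cast hta ▸ hp.count_le a)
      exact mem_LL_of_shuffle (mem_LL_of_forall_prefix_weight_nonpos m t ht (hta ▸ dvd_zero m))
        (Set.mem_insert_of_mem _ rfl) (.right (Shuffle.nil_right t))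
termination_by l => l.length
decreasing_by
  · simpa using Nat.lt_succ_of_le (length_eraseN_le a m t)
  · simp

theorem le_mul_count_b_add_count_a_of_append_eq {m : ℕ} {s₁ s₂ : List AB}
    (h : s₁ ++ s₂ = [b] ++ wa m) : m ≤ m * s₁.count b + s₂.count a := by
  cases s₁ with
  | nil => simp_all [wa]
  | cons c s₁ =>
    obtain ⟨rfl, -⟩ := cons_eq_cons.mp h
    have : m ≤ m * (b :: s₁).count b := Nat.le_mul_of_pos_right m (by simp)
    omega

theorem mul_le_of_isShuffleOfN {m : ℕ} {w' : List AB} :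
    ∀ {x : ℕ} {u v : List AB}, IsShuffleOfN ([b] ++ wa m) x w' (u ++ v) →
      m * x ≤ m * u.count b + v.count a
  | 0, _, _, _ => by simp
  | x + 1, u, v, ⟨_, hN, hsh⟩ => by
    obtain ⟨t₁, t₂, s₁, s₂, rfl, hs, h₁, h₂⟩ := hsh.exists_of_append
    have ih := mul_le_of_isShuffleOfN (x := x) hN
    have hcopy := le_mul_count_b_add_count_a_of_append_eq hs.symm
    rw [h₁.count_eq, h₂.count_eq, mul_add, mul_add, mul_one]
    omega

theorem exists_append_suffix_weight_nonneg_prefix_weight_nonpos (m : ℕ) (w : List AB) :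
    ∃ w₁ r, w = w₁ ++ r ∧ (∀ s, s <:+ w₁ → 0 ≤ weight m s) ∧ ∀ q, q <+: r → weight m q ≤ 0 := by
  obtain ⟨w₁, hw₁, hmax⟩ := w.inits.toFinset.exists_max_image (weight m) ⟨[], by simp⟩
  simp only [mem_toFinset, mem_inits] at hw₁ hmax
  obtain ⟨r, rfl⟩ := hw₁
  refine ⟨w₁, r, rfl, ?_, ?_⟩
  · rintro s ⟨p, rfl⟩
    have := hmax p ((prefix_append p s).trans (prefix_append _ r))
    simp only [weight_append] at this
    linarith
  · rintro q ⟨q', rfl⟩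
    have := hmax (w₁ ++ q) (by simp)
    simp only [weight_append] at this
    linarith

theorem stmt14 (m : ℕ) (hm : 1 ≤ m) (w : List AB) :
    ∃ w₁ w₂ w₃ : List AB, w = w₁ ++ w₂ ++ w₃ ∧
      w₁ ∈ LL {[b] ++ wa m, [a]} ∧ w₂ ∈ LL {[b] ++ wa m, [b]} ∧ w₃.count a < m ∧
      ∀ (x : ℕ) (w' : List AB), IsShuffleOfN ([b] ++ wa m) x w' w →
        (x : ℚ) ≤ (w₁.count b : ℚ) + (w₂.count a : ℚ) / (m : ℚ) := by
  obtain ⟨w₁, r, rfl, hw₁, hr⟩ := exists_append_suffix_weight_nonneg_prefix_weight_nonpos m w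
  obtain ⟨w₂, w₃, rfl, hw₂⟩ := exists_append_count_eq a (Nat.mul_div_le (r.count a) m)
  have hw₃ : w₃.count a < m := by
    have hmod := Nat.mod_lt ((w₂ ++ w₃).count a) hm
    have hdiv := Nat.div_add_mod ((w₂ ++ w₃).count a) m
    have hsum : (w₂ ++ w₃).count a = w₂.count a + w₃.count a := count_append
    omega
  generalize (w₂ ++ w₃).count a / m = q at hw₂
  refine ⟨w₁, w₂, w₃, (append_assoc _ _ _).symm, mem_LL_of_forall_suffix_weight_nonneg m w₁ hw₁,
    mem_LL_of_forall_prefix_weight_nonpos m w₂ (fun p hp => hr p (hp.trans (prefix_append _ _)))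
      (hw₂ ▸ dvd_mul_right m q), hw₃, fun x w' hx => ?_⟩
  have hbound := mul_le_of_isShuffleOfN hx
  have hxq : x ≤ w₁.count b + q := by
    rw [count_append, hw₂] at hbound
    nlinarith
  rw [hw₂, Nat.cast_mul, mul_div_cancel_left₀ _ (by positivity)]
  exact_mod_cast hxq

end ShuffleWqo
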